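/- arXiv:1411.7938 — 6 statements merged into one kernel-verified Lean document; each statement's English description precedes it below -/
import Mathlib

section
/- Let g(z) be a polynomial with integer coefficients and let d ≥ 1 be an integer. If all coefficients of the formal power series 1 − g(−z)/(1−z)^d are non-negative, then g(−1) ≤ 0. -/
/-!
Multiplying a power series by `1/(1-z)` replaces its coefficients by their partial sums. For
`G(z) = g(-z)`, the coefficients of `G/(1-z)` are eventually constant, equal to `G(1) = g(-1)`.
If this were positive, every further partial summation would keep the coefficients eventually
positive, so those of `G/(1-z)^d` would be eventually positive and those of `1 - G/(1-z)^d`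
eventually negative.
-/

open PowerSeries Polynomial Filter Finset

theorem Int.tendsto_sum_range_atTop_of_eventually_pos {a : ℕ → ℤ}
    (ha : ∀ᶠ n in atTop, 0 < a n) : Tendsto (fun n ↦ ∑ k ∈ Finset.range n, a k) atTop atTop := by
  obtain ⟨N, hN⟩ := eventually_atTop.mp ha
  rw [← tendsto_add_atTop_iff_nat N]
  have tail_ge : ∀ m : ℕ, (∑ k ∈ Finset.range N, a k) + m ≤ ∑ k ∈ Finset.range (m + N), a k := by
    intro m
    rw [add_comm m N, sum_range_add]
    gcongr
    calc (m : ℤ) = ∑ _k ∈ Finset.range m, (1 : ℤ) := by simp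
      _ ≤ ∑ k ∈ Finset.range m, a (N + k) := sum_le_sum fun k _ ↦ hN _ (Nat.le_add_right N k)
  exact tendsto_atTop_mono tail_ge
    (tendsto_atTop_add_const_left _ _ tendsto_natCast_atTop_atTop)

namespace PowerSeries

variable {R : Type*} [CommRing R]

theorem mk_choose_eq_invOneSubPow {d : ℕ} (hd : 1 ≤ d) :
    (mk fun m ↦ ((m + d - 1).choose (d - 1) : R)) = (invOneSubPow R d).val := by
  rw [invOneSubPow_val_eq_mk_sub_one_add_choose_of_pos R d hd]
  congr! 3 with m
  rw [Nat.add_sub_assoc hd, add_comm]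

theorem invOneSubPow_succ_val (e : ℕ) :
    (invOneSubPow R (e + 1)).val = (invOneSubPow R e).val * (invOneSubPow R 1).val := by
  rw [invOneSubPow_add, Units.val_mul]

theorem coeff_mul_invOneSubPow_one (f : R⟦X⟧) (n : ℕ) :
    coeff n (f * (invOneSubPow R 1).val) = ∑ k ∈ range (n + 1), coeff k f := by
  rw [invOneSubPow_val_succ_eq_mk_add_choose, coeff_mul,
    Nat.sum_antidiagonal_eq_sum_range_succ_mk]
  simp

theorem coeff_coe_mul_invOneSubPow_one_of_natDegree_le (p : R[X]) {n : ℕ}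
    (hn : p.natDegree ≤ n) : coeff n ((p : R⟦X⟧) * (invOneSubPow R 1).val) = p.eval 1 := by
  rw [coeff_mul_invOneSubPow_one, eval_eq_sum_range' (Nat.lt_succ_of_le hn)]
  simp

theorem eventually_pos_coeff_coe_mul_invOneSubPow {p : ℤ[X]} (hp : 0 < p.eval 1)
    {e : ℕ} (he : 1 ≤ e) : ∀ᶠ n in atTop, 0 < coeff n ((p : ℤ⟦X⟧) * (invOneSubPow ℤ e).val) := by
  induction e, he using Nat.le_induction with
  | base =>
    filter_upwards [eventually_ge_atTop p.natDegree] with n hn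
    rwa [coeff_coe_mul_invOneSubPow_one_of_natDegree_le p hn]
  | succ e _ ih =>
    have := (tendsto_add_atTop_iff_nat 1).mpr (Int.tendsto_sum_range_atTop_of_eventually_pos ih)
    filter_upwards [this.eventually_gt_atTop 0] with n hn
    rwa [invOneSubPow_succ_val, ← mul_assoc, coeff_mul_invOneSubPow_one]

end PowerSeries

/-- If `g(z) ∈ ℤ[z]`, `d ≥ 1`, and all the coefficients of the formal power
series `1 - g(-z)/(1-z)^d` (where `1/(1-z)^d = ∑ binom(n+d-1,d-1) zⁿ`) are
non-negative, then `g(-1) ≤ 0`. -/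
theorem stmt2 (g : Polynomial ℤ) (d : ℕ) (hd : 1 ≤ d)
    (h : ∀ n : ℕ, 0 ≤ PowerSeries.coeff (R := ℤ) n
      (1 - (↑(g.comp (-Polynomial.X)) : PowerSeries ℤ) *
        PowerSeries.mk fun m => ((m + d - 1).choose (d - 1) : ℤ))) :
    g.eval (-1) ≤ 0 := by
  by_contra! hg
  have hG : 0 < (g.comp (-Polynomial.X)).eval 1 := by simpa using hg
  obtain ⟨n, hcoeff_pos, hn⟩ := ((eventually_pos_coeff_coe_mul_invOneSubPow hG hd).and
    (eventually_ge_atTop 1)).exists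
  have hcoeff_nonneg := h n
  rw [mk_choose_eq_invOneSubPow hd, map_sub, PowerSeries.coeff_one, if_neg (by omega)]
    at hcoeff_nonneg
  omega
end

section
/- Let h(z) = 1 + a z + b z^2 with a, b positive integers. Then all coefficients of the formal power series 1 − h(−z)/(1−z)^a are non-negative if and only if a > b. -/
open PowerSeries Polynomial

/-!
Write `a = N + 1`, so that `(1 - z)⁻ᵃ = ∑ c m zᵐ` with `c m = (m + N).choose N`, and
`h(-z) = 1 - a z + b z²`. The coefficients of `1 - h(-z)/(1-z)^a` in degrees `0` and `1` vanish,
and the one in degree `k + 2` is `a c(k+1) - c(k+2) - b c k`. The ratio recurrence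
`(m + 1) c(m+1) = (m + 1 + N) c m` turns `k + 2` times this into `(N (k+1+N) - b (k+2)) c k`,
so all coefficients are non-negative iff `b (k + 2) ≤ N (k + 1 + N)` for every `k`. That holds
for all `k` when `b ≤ N` and fails at `k = N²` when `b ≥ N + 1`.
-/

theorem Nat.add_one_mul_choose_add_one_add (m N : ℕ) :
    (m + 1) * (m + 1 + N).choose N = (m + 1 + N) * (m + N).choose N := by
  have h := Nat.choose_mul_succ_eq (m + N) N
  rw [show m + N + 1 - N = m + 1 by omega, show m + N + 1 = m + 1 + N by omega] at h
  linarith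

section

variable {R : Type*} [CommRing R] (α β : R) (f : ℕ → R)

theorem Polynomial.coe_quadratic_comp_neg_X :
    (((1 + Polynomial.C α * Polynomial.X + Polynomial.C β * Polynomial.X ^ 2).comp
        (-Polynomial.X)) : PowerSeries R)
      = 1 - PowerSeries.C α * PowerSeries.X + PowerSeries.C β * PowerSeries.X ^ 2 := by
  simp only [Polynomial.add_comp, Polynomial.mul_comp, Polynomial.C_comp, Polynomial.X_comp,
    Polynomial.pow_comp, Polynomial.one_comp, neg_sq, mul_neg, ← sub_eq_add_neg,
    Polynomial.coe_add, Polynomial.coe_sub, Polynomial.coe_mul, Polynomial.coe_one,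
    Polynomial.coe_C, Polynomial.coe_X, Polynomial.coe_pow]

theorem PowerSeries.coeff_one_quadratic_mul_mk :
    coeff 1 ((1 - PowerSeries.C α * PowerSeries.X + PowerSeries.C β * PowerSeries.X ^ 2) * mk f)
      = f 1 - α * f 0 := by
  simp [add_mul, sub_mul, mul_assoc, coeff_X_pow_mul']

theorem PowerSeries.coeff_add_two_quadratic_mul_mk (n : ℕ) :
    coeff (n + 2)
        ((1 - PowerSeries.C α * PowerSeries.X + PowerSeries.C β * PowerSeries.X ^ 2) * mk f)
      = f (n + 2) - α * f (n + 1) + β * f n := by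
  simp [add_mul, sub_mul, mul_assoc, coeff_X_pow_mul']

end

theorem add_two_mul_neg_quadratic_choose_combination (N b k : ℕ) :
    ((k : ℤ) + 2) * -((k + 2 + N).choose N - (N + 1) * (k + 1 + N).choose N
        + b * (k + N).choose N)
      = (N * (k + 1 + N) - b * (k + 2)) * (k + N).choose N := by
  have h₁ := Nat.add_one_mul_choose_add_one_add k N
  have h₂ := Nat.add_one_mul_choose_add_one_add (k + 1) N
  rw [show k + 1 + 1 = k + 2 by omega, show k + 1 + 1 + N = k + 2 + N by omega] at h₂
  have h₁' : ((k : ℤ) + 1) * (k + 1 + N).choose N = (k + 1 + N) * (k + N).choose N := by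
    exact_mod_cast h₁
  have h₂' : ((k : ℤ) + 2) * (k + 2 + N).choose N = (k + 2 + N) * (k + 1 + N).choose N := by
    exact_mod_cast h₂
  linear_combination N * h₁' - h₂'

theorem coeff_add_two_one_sub_quadratic_mul_choose_nonneg_iff (N b k : ℕ) :
    0 ≤ PowerSeries.coeff (k + 2) (1 - (1 - PowerSeries.C ((N + 1 : ℕ) : ℤ) * PowerSeries.X
        + PowerSeries.C (b : ℤ) * PowerSeries.X ^ 2) * mk fun m => ((m + N).choose N : ℤ))
      ↔ b * (k + 2) ≤ N * (k + 1 + N) := by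
  rw [map_sub, PowerSeries.coeff_one, if_neg (by omega), coeff_add_two_quadratic_mul_mk]
  have hk : (0 : ℤ) < k + 2 := by positivity
  have hc : (0 : ℤ) < (k + N).choose N := by exact_mod_cast Nat.choose_pos (by omega)
  rw [zero_sub, ← mul_nonneg_iff_of_pos_left hk]
  push_cast
  rw [add_two_mul_neg_quadratic_choose_combination, mul_nonneg_iff_of_pos_right hc, sub_nonneg]
  norm_cast

theorem forall_coeff_one_sub_quadratic_mul_choose_nonneg_iff (N b : ℕ) :
    (∀ n, 0 ≤ PowerSeries.coeff n (1 - (1 - PowerSeries.C ((N + 1 : ℕ) : ℤ) * PowerSeries.X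
        + PowerSeries.C (b : ℤ) * PowerSeries.X ^ 2) * mk fun m => ((m + N).choose N : ℤ)))
      ↔ ∀ k, b * (k + 2) ≤ N * (k + 1 + N) := by
  refine ⟨fun h k => (coeff_add_two_one_sub_quadratic_mul_choose_nonneg_iff N b k).1 (h (k + 2)),
    fun h n => ?_⟩
  rcases n with _ | _ | k
  · simp
  · rw [map_sub, coeff_one_quadratic_mul_mk]
    simp [Nat.add_comm 1 N, Nat.choose_succ_self_right]
  · exact (coeff_add_two_one_sub_quadratic_mul_choose_nonneg_iff N b k).2 (h k)

theorem forall_mul_add_two_le_mul_iff (N b : ℕ) :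
    (∀ k, b * (k + 2) ≤ N * (k + 1 + N)) ↔ b ≤ N := by
  refine ⟨fun h => ?_, fun hb k => ?_⟩
  · by_contra! hNb
    have := h (N * N)
    nlinarith
  · calc b * (k + 2) ≤ N * (k + 2) := Nat.mul_le_mul_right _ hb
      _ ≤ N * (k + 1 + N) := by nlinarith [Nat.le_mul_self N]

theorem stmt3_general (a b : ℕ) (ha : 0 < a) :
    (∀ n : ℕ, 0 ≤ PowerSeries.coeff (R := ℤ) n
      (1 - (↑((1 + Polynomial.C (a : ℤ) * Polynomial.X +
          Polynomial.C (b : ℤ) * Polynomial.X ^ 2).comp (-Polynomial.X)) : PowerSeries ℤ) *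
        PowerSeries.mk fun m => ((m + a - 1).choose (a - 1) : ℤ))) ↔ b < a := by
  obtain ⟨N, rfl⟩ : ∃ N, a = N + 1 := ⟨a - 1, by omega⟩
  simp only [← add_assoc, Nat.add_sub_cancel, Polynomial.coe_quadratic_comp_neg_X]
  rw [forall_coeff_one_sub_quadratic_mul_choose_nonneg_iff, forall_mul_add_two_le_mul_iff,
    Nat.lt_succ_iff]

/-- For `h(z) = 1 + a z + b z²` with `a, b` positive integers, all the
coefficients of the formal power series `1 - h(-z)/(1-z)^a` are non-negative
if and only if `a > b`. -/
theorem stmt3 (a b : ℕ) (ha : 0 < a) (hb : 0 < b) :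
    (∀ n : ℕ, 0 ≤ PowerSeries.coeff (R := ℤ) n
      (1 - (↑((1 + Polynomial.C (a : ℤ) * Polynomial.X +
          Polynomial.C (b : ℤ) * Polynomial.X ^ 2).comp (-Polynomial.X)) : PowerSeries ℤ) *
        PowerSeries.mk fun m => ((m + a - 1).choose (a - 1) : ℤ))) ↔ b < a :=
  stmt3_general a b ha
end

section
/- For every integer c > 4, the h-polynomial h_{4,c}(z) of the c-th Veronese of a polynomial ring in 4 variables satisfies h_{4,c}(−1) = (1/3)(c−4)(c^2 + 4c − 6), and in particular h_{4,c}(−1) > 0. -/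
open Polynomial

/-- The `h`-polynomial of the `c`-th Veronese of a polynomial ring in `n`
variables: its `i`-th coefficient is
`∑_{j≥0} (-1)^{i-j} binom(n-1+jc, n-1) binom(n, i-j)`, and it has degree `< n`. -/
noncomputable def hnc (n c : ℕ) : Polynomial ℤ :=
  ∑ i ∈ Finset.range n, Polynomial.C
    (∑ j ∈ Finset.range (i + 1),
      (-1 : ℤ) ^ (i - j) * ((n - 1 + j * c).choose (n - 1) : ℤ) * (n.choose (i - j) : ℤ)) *
    Polynomial.X ^ i

lemma choose2 (k : ℕ) : (((2 + k).choose 2 : ℤ)) * 2 = (k + 1) * (k + 2) := by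
  induction k with
  | zero => decide
  | succ n ih =>
    have h : (2 + (n+1)).choose 2 = (2 + n).choose 2 + (2 + n).choose 1 := by
      rw [show 2 + (n+1) = (2+n) + 1 by ring, Nat.choose_succ_succ' (2+n) 1]
      norm_num [Nat.add_comm]
    rw [h]
    push_cast [Nat.choose_one_right]
    push_cast at ih
    linarith

lemma choose3 (k : ℕ) : (((3 + k).choose 3 : ℤ)) * 6 = (k + 1) * (k + 2) * (k + 3) := by
  induction k with
  | zero => decide
  | succ n ih =>
    have h2 := choose2 (n + 1)
    have h : (3 + (n+1)).choose 3 = (3 + n).choose 3 + (3 + n).choose 2 := by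
      rw [show 3 + (n+1) = (3+n) + 1 by ring, Nat.choose_succ_succ' (3+n) 2]
      norm_num [Nat.add_comm]
    have e : (3 : ℕ) + n = 2 + (n + 1) := by ring
    rw [← e] at h2
    rw [h]
    push_cast
    push_cast at ih h2
    nlinarith [ih, h2]

/-- For every integer `c > 4`, the `h`-polynomial `h_{4,c}` satisfies
`h_{4,c}(-1) = (1/3)(c-4)(c² + 4c - 6)`, and in particular `h_{4,c}(-1) > 0`. -/
theorem stmt7 (c : ℕ) (hc : 4 < c) :
    3 * (hnc 4 c).eval (-1) = ((c : ℤ) - 4) * ((c : ℤ) ^ 2 + 4 * (c : ℤ) - 6) ∧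
    0 < (hnc 4 c).eval (-1) := by
  have h1 := choose3 c
  have h2 := choose3 (2 * c)
  have h3 := choose3 (3 * c)
  have key6 : 6 * (hnc 4 c).eval (-1) = 2 * (c:ℤ)^3 - 44 * c + 48 := by
    simp only [hnc, Finset.sum_range_succ, Finset.sum_range_zero]
    simp only [eval_add, eval_mul, eval_C, eval_pow, eval_X]
    norm_num
    have h42 : ((Nat.choose 4 2 : ℕ) : ℤ) = 6 := by decide
    rw [h42]
    push_cast at h1 h2 h3 ⊢
    linarith [h1, h2, h3]
  have key : 3 * (hnc 4 c).eval (-1) = ((c : ℤ) - 4) * ((c : ℤ) ^ 2 + 4 * (c : ℤ) - 6) := by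
    nlinarith [key6]
  refine ⟨key, ?_⟩
  have hc' : (4 : ℤ) < c := by exact_mod_cast hc
  nlinarith [key, hc']
end

section
/- For integers m, n ≥ 1 there is an identity of formal power series: Σ_{i≥0} binom(m−1+i, m−1) binom(n−1+i, n−1) z^i = h_{m,n}(z)/(1−z)^{m+n−1}, where h_{m,n}(z) = Σ_{i=0}^{m−1} binom(m−1, i) binom(n−1, i) z^i. -/
/-!
Write `S_{a,b}` for the series with coefficients `C(a+i,a)·C(b+i,b)` and `h_{a,b}` for the
numerator with coefficients `C(a,k)·C(b,k)`, so that the claim is `(1-X)^(a+b+1) S_{a,b} = h_{a,b}`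
with `a = m-1`, `b = n-1`. Pascal's rule gives the same recurrence on both sides:
`(1-X) S_{a+1,b+1} = S_{a+1,b} + S_{a,b+1} - S_{a,b}` and
`h_{a+1,b+1} = h_{a+1,b} + h_{a,b+1} - (1-X) h_{a,b}`, while for `a = 0` or `b = 0` the series
`S` is the expansion of `1/(1-X)^(a+b+1)` and `h = 1`. A double induction finishes the proof.
-/

open PowerSeries Polynomial

namespace PowerSeries

variable (R : Type*) [CommRing R]

noncomputable def segreHilbertSeries (a b : ℕ) : R⟦X⟧ :=
  mk fun i => ((a + i).choose a * (b + i).choose b : R)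

noncomputable def segreNumerator (a b : ℕ) : R⟦X⟧ :=
  mk fun k => (a.choose k * b.choose k : R)

variable {R}

theorem segreHilbertSeries_zero_left (b : ℕ) :
    segreHilbertSeries R 0 b = (invOneSubPow R (b + 1)).val := by
  ext i
  simp [segreHilbertSeries, invOneSubPow_val_succ_eq_mk_add_choose, add_comm]

theorem segreHilbertSeries_zero_right (a : ℕ) :
    segreHilbertSeries R a 0 = (invOneSubPow R (a + 1)).val := by
  ext i
  simp [segreHilbertSeries, invOneSubPow_val_succ_eq_mk_add_choose, add_comm]

theorem segreNumerator_zero_left (b : ℕ) : segreNumerator R 0 b = 1 := by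
  ext (_ | k) <;> simp [segreNumerator, coeff_one]

theorem segreNumerator_zero_right (a : ℕ) : segreNumerator R a 0 = 1 := by
  ext (_ | k) <;> simp [segreNumerator, coeff_one]

/-- With `P = C(a+i+2, a+1) = P' + p` and `Q = C(b+i+2, b+1) = Q' + q` by Pascal's rule, this is
`PQ - P'Q' = Pq + pQ - pq`. -/
theorem one_sub_X_mul_segreHilbertSeries_succ_succ (a b : ℕ) :
    (1 - X) * segreHilbertSeries R (a + 1) (b + 1) =
      segreHilbertSeries R (a + 1) b + segreHilbertSeries R a (b + 1) -
        segreHilbertSeries R a b := by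
  ext (_ | i)
  · simp [segreHilbertSeries]
  · simp only [sub_mul, one_mul, map_sub, map_add, coeff_succ_X_mul, segreHilbertSeries,
      coeff_mk]
    rw [show a + 1 + (i + 1) = a + i + 1 + 1 by omega, show b + 1 + (i + 1) = b + i + 1 + 1 by omega,
      Nat.choose_succ_succ' (a + i + 1), Nat.choose_succ_succ' (b + i + 1)]
    simp only [show a + 1 + i = a + i + 1 by omega, show b + 1 + i = b + i + 1 by omega,
      ← add_assoc]
    push_cast
    ring

theorem segreNumerator_succ_succ (a b : ℕ) :
    segreNumerator R (a + 1) (b + 1) =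
      segreNumerator R (a + 1) b + segreNumerator R a (b + 1) - (1 - X) * segreNumerator R a b := by
  ext (_ | k)
  · simp [segreNumerator]
  · simp only [sub_mul, one_mul, map_sub, map_add, coeff_succ_X_mul, segreNumerator, coeff_mk,
      Nat.choose_succ_succ' a k, Nat.choose_succ_succ' b k]
    push_cast
    ring

theorem one_sub_X_pow_mul_segreHilbertSeries (a b : ℕ) :
    (1 - X) ^ (a + b + 1) * segreHilbertSeries R a b = segreNumerator R a b := by
  induction a generalizing b with
  | zero =>
    rw [segreHilbertSeries_zero_left, segreNumerator_zero_left, zero_add,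
      ← invOneSubPow_inv_eq_one_sub_pow, Units.inv_val]
  | succ a iha =>
    induction b with
    | zero =>
      rw [segreHilbertSeries_zero_right, segreNumerator_zero_right, add_zero,
        ← invOneSubPow_inv_eq_one_sub_pow, Units.inv_val]
    | succ b ihb =>
      have h₁ := iha (b + 1)
      have h₂ := iha b
      rw [show a + (b + 1) + 1 = a + 1 + b + 1 by omega] at h₁
      rw [segreNumerator_succ_succ, ← ihb, ← h₁, ← h₂,
        show a + 1 + (b + 1) + 1 = a + 1 + b + 1 + 1 by omega, pow_succ, mul_assoc,
        one_sub_X_mul_segreHilbertSeries_succ_succ, show a + 1 + b + 1 = a + b + 1 + 1 by omega]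
      ring

theorem segreHilbertSeries_eq_segreNumerator_mul (a b : ℕ) :
    segreHilbertSeries R a b = segreNumerator R a b * (invOneSubPow R (a + b + 1)).val := by
  rw [← one_sub_X_pow_mul_segreHilbertSeries, ← invOneSubPow_inv_eq_one_sub_pow, mul_comm,
    ← mul_assoc, Units.val_inv, one_mul]

theorem coe_sum_choose_mul_choose_eq_segreNumerator (a b : ℕ) :
    ((∑ k ∈ Finset.range (a + 1), Polynomial.C (a.choose k * b.choose k : R) * Polynomial.X ^ k :
      R[X]) : R⟦X⟧) = segreNumerator R a b := by
  ext k
  simp only [Polynomial.coeff_coe, Polynomial.finsetSum_coeff, Polynomial.coeff_C_mul_X_pow,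
    Finset.sum_ite_eq, Finset.mem_range, segreNumerator, coeff_mk]
  split_ifs with hk
  · rfl
  · simp [Nat.choose_eq_zero_of_lt (not_lt.mp hk)]

end PowerSeries

/-- The Hilbert series of the Segre product of polynomial rings in `m` and `n`
variables: `∑_{i≥0} binom(m-1+i,m-1)·binom(n-1+i,n-1) zⁱ = h_{m,n}(z)/(1-z)^{m+n-1}`,
where `h_{m,n}(z) = ∑_{i=0}^{m-1} binom(m-1,i)·binom(n-1,i) zⁱ` and
`1/(1-z)^{m+n-1} = ∑_{j≥0} binom(j+m+n-2, m+n-2) zʲ`. -/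
theorem stmt8 (m n : ℕ) (hm : 1 ≤ m) (hn : 1 ≤ n) :
    PowerSeries.mk (fun i => (((m - 1 + i).choose (m - 1) * (n - 1 + i).choose (n - 1) : ℕ) : ℤ)) =
      (↑(∑ i ∈ Finset.range m,
          Polynomial.C ((((m - 1).choose i * (n - 1).choose i : ℕ)) : ℤ) * (Polynomial.X : Polynomial ℤ) ^ i) :
        PowerSeries ℤ) *
      PowerSeries.mk (fun j => ((j + m + n - 2).choose (m + n - 2) : ℤ)) := by
  obtain ⟨a, rfl⟩ : ∃ a, m = a + 1 := ⟨m - 1, by omega⟩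
  obtain ⟨b, rfl⟩ : ∃ b, n = b + 1 := ⟨n - 1, by omega⟩
  have hdeg (j : ℕ) : j + (a + 1) + (b + 1) - 2 = a + b + j := by omega
  simp only [Nat.add_sub_cancel, Nat.cast_mul, hdeg, show a + 1 + (b + 1) - 2 = a + b by omega]
  rw [coe_sum_choose_mul_choose_eq_segreNumerator, ← invOneSubPow_val_succ_eq_mk_add_choose]
  exact segreHilbertSeries_eq_segreNumerator_mul a b
end

section
/- Let P = k[y_1,...,y_{e−1}] be a polynomial ring over a field k, let f_1,...,f_c be a regular sequence of quadrics in P, and let g_1,...,g_c be linear forms in P[y_e]. If the ideal (f_1 − y_e g_1, ..., f_c − y_e g_c, y_e) of P[y_e] equals (f_1,...,f_c, y_e), then f_1 − y_e g_1, ..., f_c − y_e g_c is a regular sequence in P[y_e], and y_e is a non-zerodivisor on P[y_e]/(f_1 − y_e g_1, ..., f_c − y_e g_c). -/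
/-!
Writing `y = X (Fin.last e')` and `F i = f i - y * g i`, setting `y = 0` sends `F` to `f`, so
`y, F 1, …, F c` is a regular sequence. All of its members are homogeneous of positive degree,
and by graded Nakayama such a sequence in a Noetherian polynomial ring stays regular under
permutation; hence `F 1, …, F c, y` is regular as well.
-/

open MvPolynomial RingTheory.Sequence Pointwise

attribute [local instance] MvPolynomial.gradedAlgebra

namespace MvPolynomial

variable {σ R : Type*} [CommRing R]

theorem homogeneousComponent_pow_mul_of_lt {t : MvPolynomial σ R} (ht : constantCoeff t = 0)
    (x : MvPolynomial σ R) {d N : ℕ} (hd : d < N) :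
    homogeneousComponent d (t ^ N * x) = 0 := by
  have hN : (N : ℕ∞) ≤ ((t ^ N * x : MvPolynomial σ R) : MvPowerSeries σ R).order :=
    calc (N : ℕ∞) ≤ ((t : MvPowerSeries σ R) ^ N).order :=
          MvPowerSeries.le_order_pow_of_constantCoeff_eq_zero N <| by
            rwa [← MvPowerSeries.coeff_zero_eq_constantCoeff_apply, coeff_coe,
              ← constantCoeff_eq]
      _ ≤ ((t : MvPowerSeries σ R) ^ N).order + (x : MvPowerSeries σ R).order := le_self_add
      _ ≤ _ := by rw [coe_mul, coe_pow]; exact MvPowerSeries.le_order_mul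
  ext m
  rw [coeff_homogeneousComponent, coeff_zero]
  split_ifs with hm
  · rw [← coeff_coe]
    exact MvPowerSeries.coeff_of_lt_order (lt_of_lt_of_le (by exact_mod_cast hm ▸ hd) hN)
  · rfl

theorem homogeneousComponent_mem_of_isHomogeneous {I : Ideal (MvPolynomial σ R)}
    (hI : I.IsHomogeneous (homogeneousSubmodule σ R)) {p : MvPolynomial σ R} (hp : p ∈ I)
    (d : ℕ) : homogeneousComponent d p ∈ I :=
  decomposition.decompose'_apply p d ▸ hI d hp

theorem mem_of_mul_mem_of_isUnit_constantCoeff {I : Ideal (MvPolynomial σ R)}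
    (hI : I.IsHomogeneous (homogeneousSubmodule σ R)) {s x : MvPolynomial σ R}
    (hs : IsUnit (constantCoeff s)) (hsx : s * x ∈ I) : x ∈ I := by
  -- `x ≡ t ^ N * x` modulo `I`, and `t ^ N * x` has no homogeneous components below degree `N`.
  set t := 1 - C (↑hs.unit⁻¹ : R) * s
  have ht : constantCoeff t = 0 := by simp [t]
  have hxt : ∀ N, x - t ^ N * x ∈ I := by
    intro N
    induction N with
    | zero => simp
    | succ N ih =>
      have : x - t ^ (N + 1) * x = C (↑hs.unit⁻¹ : R) * (s * x) + t * (x - t ^ N * x) := by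
        simp only [t]; ring
      rw [this]
      exact I.add_mem (I.mul_mem_left _ hsx) (I.mul_mem_left _ ih)
  rw [← sum_homogeneousComponent x]
  refine I.sum_mem fun d hd => ?_
  simpa [homogeneousComponent_pow_mul_of_lt ht x (Finset.mem_range.mp hd)] using
    homogeneousComponent_mem_of_isHomogeneous hI (hxt (x.totalDegree + 1)) d

theorem IsHomogeneous.constantCoeff_eq_zero {p : MvPolynomial σ R} {d : ℕ}
    (hp : p.IsHomogeneous d) (hd : 0 < d) : constantCoeff p = 0 := by
  rw [constantCoeff_eq]
  exact hp.coeff_eq_zero (by simpa using hd.ne)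

theorem isHomogeneous_ideal_span {S : Set (MvPolynomial σ R)}
    (hS : ∀ s ∈ S, ∃ d, s.IsHomogeneous d) :
    (Ideal.span S).IsHomogeneous (homogeneousSubmodule σ R) :=
  Ideal.homogeneous_span _ S fun s hs =>
    (hS s hs).imp fun d hd => (mem_homogeneousSubmodule d s).mpr hd

theorem eq_bot_of_eq_pointwise_smul_of_isHomogeneous [Finite σ] [IsNoetherianRing R]
    {I : Ideal (MvPolynomial σ R)} (hI : I.IsHomogeneous (homogeneousSubmodule σ R))
    {a : MvPolynomial σ R} (ha : constantCoeff a = 0)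
    {K : Submodule (MvPolynomial σ R)
      (MvPolynomial σ R ⧸ (I • ⊤ : Submodule (MvPolynomial σ R) (MvPolynomial σ R)))}
    (hK : K = a • K) : K = ⊥ := by
  obtain ⟨r, hr1, hrK⟩ := Submodule.exists_sub_one_mem_and_smul_eq_zero_of_fg_of_le_smul
    (Ideal.span {a}) K (IsNoetherian.noetherian K)
    (by rw [Submodule.ideal_span_singleton_smul]; exact hK.le)
  have hr : constantCoeff r = 1 := by
    obtain ⟨q, hq⟩ := Ideal.mem_span_singleton'.mp hr1
    simpa [ha, sub_eq_zero] using congrArg constantCoeff hq.symm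
  -- Nakayama gives `r ≡ 1 mod a` killing `K`; such an `r` is a nonzerodivisor modulo `I`.
  rw [eq_bot_iff]
  intro z hz
  obtain ⟨x, rfl⟩ := Submodule.Quotient.mk_surjective _ z
  have hrx := hrK _ hz
  rw [← Submodule.Quotient.mk_smul, Submodule.Quotient.mk_eq_zero, Ideal.smul_eq_mul,
    Ideal.mul_top, smul_eq_mul] at hrx
  rw [Submodule.mem_bot, Submodule.Quotient.mk_eq_zero, Ideal.smul_eq_mul, Ideal.mul_top]
  exact mem_of_mul_mem_of_isUnit_constantCoeff hI (by simp [hr]) hrx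

theorem isWeaklyRegular_of_perm_of_isHomogeneous [Finite σ] [IsNoetherianRing R]
    {rs rs' : List (MvPolynomial σ R)} (h : IsWeaklyRegular (MvPolynomial σ R) rs)
    (hperm : rs.Perm rs') (hrs : ∀ r ∈ rs, ∃ d, 0 < d ∧ r.IsHomogeneous d) :
    IsWeaklyRegular (MvPolynomial σ R) rs' := by
  refine h.prototype_perm hperm fun a b rs₀ hsub hK => ?_
  have hmem : ∀ r ∈ a :: b :: rs₀, ∃ d, 0 < d ∧ r.IsHomogeneous d :=
    fun r hr => hrs r (hsub.subset hr)
  obtain ⟨d, hd, ha⟩ := hmem a List.mem_cons_self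
  refine eq_bot_of_eq_pointwise_smul_of_isHomogeneous ?_ (ha.constantCoeff_eq_zero hd) hK
  exact isHomogeneous_ideal_span fun r hr =>
    (hmem r (List.mem_cons_of_mem _ (List.mem_cons_of_mem _ hr))).imp fun _ => And.right

theorem isRegular_of_isWeaklyRegular_of_constantCoeff_eq_zero [Nontrivial R]
    {rs : List (MvPolynomial σ R)}
    (h : IsWeaklyRegular (MvPolynomial σ R) rs) (hrs : ∀ r ∈ rs, constantCoeff r = 0) :
    IsRegular (MvPolynomial σ R) rs := by
  refine ⟨h, fun htop => ?_⟩
  have hle : Ideal.ofList rs ≤ RingHom.ker (constantCoeff : MvPolynomial σ R →+* R) :=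
    Ideal.span_le.mpr hrs
  have h1 : (1 : MvPolynomial σ R) ∈ Ideal.ofList rs := by
    rw [← Ideal.mul_top (Ideal.ofList rs), ← Ideal.smul_eq_mul, ← htop]
    trivial
  simpa using hle h1

end MvPolynomial

theorem Ideal.isSMulRegular_quotient_mk_iff {A : Type*} [CommRing A] (I : Ideal A) (r : A) :
    IsSMulRegular (A ⧸ I) (Ideal.Quotient.mk I r) ↔
      IsSMulRegular (A ⧸ (I • ⊤ : Submodule A A)) r := by
  rw [← Ideal.Quotient.algebraMap_eq, isSMulRegular_algebraMap_iff]
  have hI : (I • ⊤ : Submodule A A) = I := by rw [Ideal.smul_eq_mul, Ideal.mul_top]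
  exact ((Submodule.quotEquivOfEq _ _ hI).isSMulRegular_congr r).symm

theorem RingTheory.Sequence.isWeaklyRegular_cons_of_ker_eq_span {A B : Type*} [CommRing A]
    [CommRing B] {φ : A →+* B} (hφ : Function.Surjective φ) {y : A}
    (hker : RingHom.ker φ = Ideal.span {y}) (hy : IsSMulRegular A y) {rs : List A}
    (hrs : IsWeaklyRegular B (rs.map φ)) : IsWeaklyRegular A (y :: rs) := by
  have hyA : (y • ⊤ : Submodule A A) = RingHom.ker φ := by
    rw [hker, ← Submodule.ideal_span_singleton_smul, Ideal.smul_eq_mul, Ideal.mul_top]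
  let e : QuotSMulTop y A ≃+ B :=
    (Submodule.quotEquivOfEq _ _ hyA).toAddEquiv.trans
      (RingHom.quotientKerEquivOfSurjective hφ).toAddEquiv
  have he : ∀ q : A, e (Submodule.Quotient.mk q) = φ q := fun _ => rfl
  refine (isWeaklyRegular_cons_iff A y rs).mpr
    ⟨hy, (AddEquiv.isWeaklyRegular_congr (e := e) ?_).mpr hrs⟩
  refine List.forall₂_map_right_iff.mpr (List.forall₂_same.mpr fun r _ z => ?_)
  obtain ⟨q, rfl⟩ := Submodule.Quotient.mk_surjective _ z
  rw [← Submodule.Quotient.mk_smul, he, he, smul_eq_mul, smul_eq_mul, map_mul]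

section LastVariable

variable {R : Type*} [CommRing R] {n : ℕ}

variable (R n) in
noncomputable def evalLastZero : MvPolynomial (Fin (n + 1)) R →ₐ[R] MvPolynomial (Fin n) R :=
  aeval (Fin.lastCases 0 X)

@[simp]
theorem evalLastZero_X_last : evalLastZero R n (X (Fin.last n)) = 0 := by
  simp [evalLastZero]

@[simp]
theorem evalLastZero_X_castSucc (i : Fin n) : evalLastZero R n (X i.castSucc) = X i := by
  simp [evalLastZero]

@[simp]
theorem evalLastZero_rename_castSucc (p : MvPolynomial (Fin n) R) :
    evalLastZero R n (rename Fin.castSucc p) = p := by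
  rw [← AlgHom.comp_apply]
  conv_rhs => rw [← AlgHom.id_apply (R := R) p]
  congr 1
  ext i
  simp

theorem evalLastZero_surjective : Function.Surjective (evalLastZero R n) :=
  fun p => ⟨rename Fin.castSucc p, evalLastZero_rename_castSucc p⟩

theorem ker_evalLastZero :
    RingHom.ker (evalLastZero R n) = Ideal.span {X (Fin.last n)} := by
  set J := Ideal.span {(X (Fin.last n) : MvPolynomial (Fin (n + 1)) R)}
  refine le_antisymm (fun p hp => ?_) (Ideal.span_le.mpr (by simp))
  have hmk : (Ideal.Quotient.mkₐ R J).comp ((rename Fin.castSucc).comp (evalLastZero R n)) =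
      Ideal.Quotient.mkₐ R J := by
    ext i
    refine Fin.lastCases ?_ (fun j => ?_) i
    · simp [J]
    · simp
  rw [← Ideal.Quotient.eq_zero_iff_mem, ← Ideal.Quotient.mkₐ_eq_mk R, ← hmk]
  simp [(RingHom.mem_ker).mp hp]

end LastVariable

theorem stmt15_general {k : Type*} [Field k] (e' c : ℕ)
    (f : Fin c → MvPolynomial (Fin e') k)
    (hf2 : ∀ i, (f i).IsHomogeneous 2)
    (hfreg : RingTheory.Sequence.IsRegular (MvPolynomial (Fin e') k) (List.ofFn f))
    (g : Fin c → MvPolynomial (Fin (e' + 1)) k)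
    (hg1 : ∀ i, (g i).IsHomogeneous 1) :
    RingTheory.Sequence.IsRegular (MvPolynomial (Fin (e' + 1)) k)
      (List.ofFn fun i => MvPolynomial.rename Fin.castSucc (f i) -
        MvPolynomial.X (Fin.last e') * g i) ∧
    IsSMulRegular
      (MvPolynomial (Fin (e' + 1)) k ⧸
        Ideal.span (Set.range fun i => MvPolynomial.rename Fin.castSucc (f i) -
          MvPolynomial.X (Fin.last e') * g i))
      (Ideal.Quotient.mk
        (Ideal.span (Set.range fun i => MvPolynomial.rename Fin.castSucc (f i) -
          MvPolynomial.X (Fin.last e') * g i))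
        (MvPolynomial.X (Fin.last e'))) := by
  set F := fun i => rename Fin.castSucc (f i) - X (Fin.last e') * g i
  set y : MvPolynomial (Fin (e' + 1)) k := X (Fin.last e')
  have hF : ∀ i, (F i).IsHomogeneous 2 := fun i =>
    (hf2 i).rename_isHomogeneous.sub ((isHomogeneous_X k _).mul (hg1 i))
  have hhom : ∀ r ∈ y :: List.ofFn F, ∃ d, 0 < d ∧ r.IsHomogeneous d := by
    simp only [List.mem_cons, List.mem_ofFn]
    rintro r (rfl | ⟨i, rfl⟩)
    exacts [⟨1, one_pos, isHomogeneous_X k _⟩, ⟨2, two_pos, hF i⟩]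
  have hyF : IsWeaklyRegular _ (y :: List.ofFn F) :=
    isWeaklyRegular_cons_of_ker_eq_span evalLastZero_surjective ker_evalLastZero
      (.of_ne_zero (X_ne_zero _))
      (by simpa [List.map_ofFn, Function.comp_def, F, y] using hfreg.1)
  have hFy :=
    isWeaklyRegular_of_perm_of_isHomogeneous hyF (List.perm_append_singleton _ _).symm hhom
  rw [isWeaklyRegular_append_iff, isWeaklyRegular_singleton_iff] at hFy
  have hspan : Ideal.ofList (List.ofFn F) = Ideal.span (Set.range F) :=
    congrArg Ideal.span (Set.ext fun _ => List.mem_ofFn)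
  refine ⟨isRegular_of_isWeaklyRegular_of_constantCoeff_eq_zero hFy.1 fun r hr => ?_, ?_⟩
  · obtain ⟨d, hd, hr⟩ := hhom r (List.mem_cons_of_mem _ hr)
    exact hr.constantCoeff_eq_zero hd
  · rw [Ideal.isSMulRegular_quotient_mk_iff, ← hspan]
    exact hFy.2

/-- Let `P = k[y₁,…,y_{e-1}]` (here with `e - 1 = e'` variables), let
`f₁,…,f_c` be a regular sequence of quadrics in `P`, and let `g₁,…,g_c` be
linear forms in `P[y_e]` (the polynomial ring in one more variable). If the
ideal `(f₁ - y_e g₁, …, f_c - y_e g_c, y_e)` equals `(f₁,…,f_c, y_e)`, then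
`f₁ - y_e g₁, …, f_c - y_e g_c` is a regular sequence in `P[y_e]` and `y_e` is
a non-zerodivisor on `P[y_e]/(f₁ - y_e g₁, …, f_c - y_e g_c)`. -/
theorem stmt15 {k : Type*} [Field k] (e' c : ℕ)
    (f : Fin c → MvPolynomial (Fin e') k)
    (hf2 : ∀ i, (f i).IsHomogeneous 2)
    (hfreg : RingTheory.Sequence.IsRegular (MvPolynomial (Fin e') k) (List.ofFn f))
    (g : Fin c → MvPolynomial (Fin (e' + 1)) k)
    (hg1 : ∀ i, (g i).IsHomogeneous 1)
    (hideal :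
      Ideal.span (insert (MvPolynomial.X (Fin.last e'))
          (Set.range fun i => MvPolynomial.rename Fin.castSucc (f i) -
            MvPolynomial.X (Fin.last e') * g i)) =
        Ideal.span (insert (MvPolynomial.X (Fin.last e'))
          (Set.range fun i => MvPolynomial.rename Fin.castSucc (f i)))) :
    RingTheory.Sequence.IsRegular (MvPolynomial (Fin (e' + 1)) k)
      (List.ofFn fun i => MvPolynomial.rename Fin.castSucc (f i) -
        MvPolynomial.X (Fin.last e') * g i) ∧
    IsSMulRegular
      (MvPolynomial (Fin (e' + 1)) k ⧸
        Ideal.span (Set.range fun i => MvPolynomial.rename Fin.castSucc (f i) -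
          MvPolynomial.X (Fin.last e') * g i))
      (Ideal.Quotient.mk
        (Ideal.span (Set.range fun i => MvPolynomial.rename Fin.castSucc (f i) -
          MvPolynomial.X (Fin.last e') * g i))
        (MvPolynomial.X (Fin.last e'))) :=
  stmt15_general e' c f hf2 hfreg g hg1
end

section
/- Let L and I be quadratic monomial ideals in S = k[x_1,...,x_n] such that I is generated by a regular sequence of monomials (i.e., by pairwise coprime quadratic monomials), and suppose the minimal monomial generators m_1,...,m_d of L admit an ordering with linear quotients, i.e., (m_1,...,m_{i−1}) :_S m_i is generated by variables for each i. Then for Q = S/I and J_i the ideal of Q generated by the images of m_1,...,m_i, each colon ideal J_{i−1} :_Q (image of m_i) is either the unit ideal or generated by residue classes of variables. -/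
/-!
For a set `T` of exponents, the colon `(xᵗ : t ∈ T) :_S xᵃ` is generated by the monomials
`x^(t - a)`; truncated subtraction makes `t - a` the exponent of `xᵗ / gcd(xᵗ, xᵃ)`. Since `Q = S/I`,
the colon in `Q` is the image of `(J + I) :_S m_i`. The part coming from `J` is generated by
variables by linear quotients. Each quadratic generator `u_j` of `I` contributes `u_j / gcd(u_j, m_i)`,
which is `1` when `u_j ∣ m_i` (making the colon the unit ideal), a variable, or `u_j` itself, which
vanishes in `Q`.
-/

open MvPolynomial

namespace Finsupp

variable {σ : Type*}

lemma eq_zero_or_eq_single_or_eq_of_le_of_degree_eq_two {c u : σ →₀ ℕ} (hcu : c ≤ u)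
    (hu : u.degree = 2) : c = 0 ∨ (∃ w, c = single w 1) ∨ c = u := by
  have hc : c.degree ≤ 2 := hu ▸ degree_mono hcu
  interval_cases h : c.degree
  · exact .inl ((degree_eq_zero_iff c).mp h)
  · obtain ⟨w, hw⟩ : c ∈ Set.range (single · 1) := range_single_one.symm ▸ h
    exact .inr (.inl ⟨w, hw.symm⟩)
  · have hrest : (u - c).degree = 0 := by
      have := congrArg degree (add_tsub_cancel_of_le hcu)
      rw [map_add] at this
      omega
    exact .inr (.inr (le_antisymm hcu (tsub_eq_zero_iff_le.mp ((degree_eq_zero_iff _).mp hrest))))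

end Finsupp

namespace Ideal

variable {R : Type*} [CommRing R]

theorem map_quotient_mk_colon_span_singleton (I J : Ideal R) (g : R) :
    (J.map (Quotient.mk I)).colon (span {Quotient.mk I g}) =
      ((J ⊔ I).colon (span {g})).map (Quotient.mk I) := by
  have hcomap : ((J.map (Quotient.mk I)).colon (span {Quotient.mk I g})).comap (Quotient.mk I) =
      (J ⊔ I).colon (span {g}) := by
    ext f
    rw [mem_comap, mem_colon_span_singleton, mem_colon_span_singleton, ← map_mul, ← mem_comap,
      comap_map_of_surjective _ Quotient.mk_surjective, ← RingHom.ker_eq_comap_bot, mk_ker]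
  rw [← hcomap, map_comap_of_surjective _ Quotient.mk_surjective]

end Ideal

namespace MvPolynomial

variable {σ R : Type*} [CommSemiring R]

lemma monomial_mem_span_monomial_image {s : Set (σ →₀ ℕ)} {a t : σ →₀ ℕ} (ht : t ∈ s)
    (hta : t ≤ a) : monomial a (1 : R) ∈ Ideal.span ((fun t => monomial t (1 : R)) '' s) := by
  have hsplit : monomial a (1 : R) = monomial (a - t) 1 * monomial t 1 := by
    rw [monomial_mul, one_mul, tsub_add_cancel_of_le hta]
  rw [hsplit]
  exact Ideal.mul_mem_left _ _ (Ideal.subset_span ⟨t, ht, rfl⟩)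

theorem colon_span_monomial_image (s : Set (σ →₀ ℕ)) (a : σ →₀ ℕ) :
    (Ideal.span ((fun t => monomial t (1 : R)) '' s)).colon (Ideal.span {monomial a (1 : R)}) =
      Ideal.span ((fun t => monomial (t - a) (1 : R)) '' s) := by
  apply le_antisymm
  · intro f hf
    rw [Ideal.mem_colon_span_singleton, mem_ideal_span_monomial_image] at hf
    have : Ideal.span ((fun t => monomial (t - a) (1 : R)) '' s) =
        Ideal.span ((fun t => monomial t (1 : R)) '' ((· - a) '' s)) := by
      rw [Set.image_image]
    rw [this, mem_ideal_span_monomial_image]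
    intro α hα
    have hαa : α + a ∈ (f * monomial a 1).support := by
      rwa [mem_support_iff, coeff_mul_monomial, mul_one, ← mem_support_iff]
    obtain ⟨t, ht, hta⟩ := hf _ hαa
    exact ⟨t - a, ⟨t, ht, rfl⟩, tsub_le_iff_right.mpr hta⟩
  · rw [Ideal.span_le]
    rintro _ ⟨t, ht, rfl⟩
    rw [SetLike.mem_coe, Ideal.mem_colon_span_singleton, monomial_mul, one_mul]
    exact monomial_mem_span_monomial_image ht le_tsub_add

lemma span_range_monomial_tsub_eq_span_X_image {ι Q : Type*} [CommSemiring Q]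
    (φ : MvPolynomial σ R →+* Q) (u : ι → σ →₀ ℕ) (hu : ∀ j, (u j).degree = 2)
    (hφ : ∀ j, φ (monomial (u j) 1) = 0) (a : σ →₀ ℕ) (ha : ∀ j, ¬ u j ≤ a) :
    Ideal.span (Set.range fun j => φ (monomial (u j - a) 1)) =
      Ideal.span ((fun w => φ (X w)) '' {w | ∃ j, u j - a = Finsupp.single w 1}) := by
  apply le_antisymm
  · rw [Ideal.span_le]
    rintro _ ⟨j, rfl⟩
    rcases Finsupp.eq_zero_or_eq_single_or_eq_of_le_of_degree_eq_two tsub_le_self (hu j) with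
      h0 | ⟨w, hw⟩ | hj
    · exact absurd (tsub_eq_zero_iff_le.mp h0) (ha j)
    · exact Ideal.subset_span ⟨w, ⟨j, hw⟩, by dsimp only; rw [hw, X]⟩
    · dsimp only
      rw [SetLike.mem_coe, hj, hφ]
      exact zero_mem _
  · rw [Ideal.span_le]
    rintro _ ⟨w, ⟨j, hw⟩, rfl⟩
    exact Ideal.subset_span ⟨j, by dsimp only; rw [hw, X]⟩

end MvPolynomial

theorem stmt16_general {k : Type*} [Field k] {n p d : ℕ}
    (u : Fin p → (Fin n →₀ ℕ)) (m : Fin d → (Fin n →₀ ℕ))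
    (hu2 : ∀ j, (u j).sum (fun _ e => e) = 2)
    (hlq : ∀ i : Fin d, ∃ V : Set (Fin n),
      (Ideal.span {f | ∃ i' : Fin d, i' < i ∧ f = MvPolynomial.monomial (m i') (1 : k)}).colon
          (Ideal.span {MvPolynomial.monomial (m i) (1 : k)}) =
        Ideal.span ((MvPolynomial.X : Fin n → MvPolynomial (Fin n) k) '' V)) :
    ∀ i : Fin d,
      (Ideal.span {f | ∃ i' : Fin d, i' < i ∧ f =
            Ideal.Quotient.mk (Ideal.span (Set.range fun j => MvPolynomial.monomial (u j) (1 : k)))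
              (MvPolynomial.monomial (m i') (1 : k))}).colon
          (Ideal.span {Ideal.Quotient.mk
            (Ideal.span (Set.range fun j => MvPolynomial.monomial (u j) (1 : k)))
            (MvPolynomial.monomial (m i) (1 : k))}) = ⊤ ∨
      ∃ V : Set (Fin n),
        (Ideal.span {f | ∃ i' : Fin d, i' < i ∧ f =
              Ideal.Quotient.mk (Ideal.span (Set.range fun j => MvPolynomial.monomial (u j) (1 : k)))
                (MvPolynomial.monomial (m i') (1 : k))}).colon
            (Ideal.span {Ideal.Quotient.mk
              (Ideal.span (Set.range fun j => MvPolynomial.monomial (u j) (1 : k)))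
              (MvPolynomial.monomial (m i) (1 : k))}) =
          Ideal.span ((fun v => Ideal.Quotient.mk
            (Ideal.span (Set.range fun j => MvPolynomial.monomial (u j) (1 : k)))
            (MvPolynomial.X v)) '' V) := by
  intro i
  set I := Ideal.span (Set.range fun j => monomial (u j) (1 : k)) with hIdef
  set mk := Ideal.Quotient.mk I
  obtain ⟨V, hV⟩ := hlq i
  have hJ : {f | ∃ i', i' < i ∧ f = monomial (m i') (1 : k)} =
      (fun t => monomial t 1) '' (m '' Set.Iio i) := by
    ext; simp [eq_comm]
  have hJbar : {f | ∃ i', i' < i ∧ f = mk (monomial (m i') 1)} =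
      mk '' ((fun t => monomial t 1) '' (m '' Set.Iio i)) := by
    ext; simp [eq_comm]
  have hJI : Ideal.span ((fun t => monomial t (1 : k)) '' (m '' Set.Iio i)) ⊔ I =
      Ideal.span ((fun t => monomial t 1) '' (m '' Set.Iio i ∪ Set.range u)) := by
    rw [Set.image_union, Ideal.span_union, hIdef, ← Set.range_comp]
    rfl
  have hcolon : (Ideal.span {f | ∃ i', i' < i ∧ f = mk (monomial (m i') 1)}).colon
        (Ideal.span {mk (monomial (m i) 1)}) =
      Ideal.span ((fun v => mk (X v)) '' V) ⊔
        Ideal.span (Set.range fun j => mk (monomial (u j - m i) 1)) := by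
    rw [hJbar, ← Ideal.map_span, Ideal.map_quotient_mk_colon_span_singleton, hJI,
      colon_span_monomial_image, Set.image_union, Ideal.span_union, ← colon_span_monomial_image,
      ← hJ, hV, Ideal.map_sup, Ideal.map_span, Ideal.map_span, Set.image_image, Set.image_image,
      ← Set.range_comp]
    rfl
  rw [hcolon]
  by_cases hdiv : ∃ j, u j ≤ m i
  · left
    obtain ⟨j, hj⟩ := hdiv
    rw [Ideal.eq_top_iff_one]
    refine Ideal.mem_sup_right (Ideal.subset_span ⟨j, ?_⟩)
    simp [tsub_eq_zero_of_le hj]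
  · right
    refine ⟨V ∪ {w | ∃ j, u j - m i = Finsupp.single w 1}, ?_⟩
    rw [Set.image_union, Ideal.span_union, ← span_range_monomial_tsub_eq_span_X_image mk u hu2
      (fun j => Ideal.Quotient.eq_zero_iff_mem.mpr (Ideal.subset_span ⟨j, rfl⟩)) (m i)
      (not_exists.mp hdiv)]

/-- Let `L = (m₁,…,m_d)` and `I = (u₁,…,u_p)` be quadratic monomial ideals of
`S = k[x₁,…,xₙ]` (monomials given by exponent vectors of total degree `2`),
with `I` generated by a regular sequence of monomials (pairwise coprime, i.e.
with pairwise disjoint supports), and suppose `m₁,…,m_d` has linear quotients: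
each `(m₁,…,m_{i-1}) :_S m_i` is generated by variables. Then in `Q = S/I`,
for each `i` the colon ideal `(m̄₁,…,m̄_{i-1}) :_Q m̄_i` is either the unit
ideal or generated by residue classes of variables. -/
theorem stmt16 {k : Type*} [Field k] {n p d : ℕ}
    (u : Fin p → (Fin n →₀ ℕ)) (m : Fin d → (Fin n →₀ ℕ))
    (hu2 : ∀ j, (u j).sum (fun _ e => e) = 2)
    (hm2 : ∀ i, (m i).sum (fun _ e => e) = 2)
    (hcop : ∀ j j', j ≠ j' → Disjoint (u j).support (u j').support)
    (hlq : ∀ i : Fin d, ∃ V : Set (Fin n),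
      (Ideal.span {f | ∃ i' : Fin d, i' < i ∧ f = MvPolynomial.monomial (m i') (1 : k)}).colon
          (Ideal.span {MvPolynomial.monomial (m i) (1 : k)}) =
        Ideal.span ((MvPolynomial.X : Fin n → MvPolynomial (Fin n) k) '' V)) :
    ∀ i : Fin d,
      (Ideal.span {f | ∃ i' : Fin d, i' < i ∧ f =
            Ideal.Quotient.mk (Ideal.span (Set.range fun j => MvPolynomial.monomial (u j) (1 : k)))
              (MvPolynomial.monomial (m i') (1 : k))}).colon
          (Ideal.span {Ideal.Quotient.mk
            (Ideal.span (Set.range fun j => MvPolynomial.monomial (u j) (1 : k)))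
            (MvPolynomial.monomial (m i) (1 : k))}) = ⊤ ∨
      ∃ V : Set (Fin n),
        (Ideal.span {f | ∃ i' : Fin d, i' < i ∧ f =
              Ideal.Quotient.mk (Ideal.span (Set.range fun j => MvPolynomial.monomial (u j) (1 : k)))
                (MvPolynomial.monomial (m i') (1 : k))}).colon
            (Ideal.span {Ideal.Quotient.mk
              (Ideal.span (Set.range fun j => MvPolynomial.monomial (u j) (1 : k)))
              (MvPolynomial.monomial (m i) (1 : k))}) =
          Ideal.span ((fun v => Ideal.Quotient.mk
            (Ideal.span (Set.range fun j => MvPolynomial.monomial (u j) (1 : k)))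
            (MvPolynomial.X v)) '' V) :=
  stmt16_general u m hu2 hlq
end
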